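/- Let N ≥ 2 and p ≥ 2N+1, and let A ∈ ℝ^{m×m} (m = r + n(p−1)) be the VECM state matrix built from α, β ∈ ℝ^{n×r} and Φ_1, …, Φ_{p−1} ∈ ℝ^{n×n}. Let S_1 ∈ ℝ^{r×m} be the block row (N I_r, −(N−1)β', −(N−2)β', …, −β', 0, …, 0), where the coefficient of the j-th n-block is −(N−j)β' for j = 1, …, N−1, and let S_2 ∈ ℝ^{n×m} be the block row (0_{n×r}, I_n, …, I_n, −I_n, …, −I_n, 0, …, 0) with I_n in n-blocks 1, …, N and −I_n in n-blocks N+1, …, 2N (these are the first two block rows of the flow-case blocking matrix S_ζ). Let λ ∈ ℂ with λ ∉ {0, 1} and let q = (q_β', q_1', …, q_{p−1}')' satisfy Aq = λq. Then: S_2 A^N q = λ^{1−N}(Σ_{j=N}^{2N−1} λ^j − Σ_{j=0}^{N−1} λ^j) q_1 and S_1 A^N q = λ (N λ^N/(λ−1) − Σ_{k=1}^{N−1} k λ^k) β' q_1. Consequently, if q_1 ≠ 0 and either Σ_{j=N}^{2N−1} λ^j − Σ_{j=0}^{N−1} λ^j ≠ 0, or β'q_1 ≠ 0 and N λ^N/(λ−1)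 − Σ_{k=1}^{N−1} k λ^k ≠ 0, then the eigenvector q does not lie in the kernel of the flow-case blocked observation matrix C_b = S_ζ A^N. -/

import Mathlib

open Matrix

/-- The VECM state matrix A ∈ R^{m×m}, m = r + n(p-1) (here s = p-1), with
first block row (β'α + I_r, β'Φ₁, …, β'Φ_{p-1}), second block row
(α, Φ₁, …, Φ_{p-1}), blocks (j+2, j+1) equal to I_n, and all other blocks 0.
States are indexed by `Fin r ⊕ Fin s × Fin n`. -/
def vecmStateMatrix {R : Type*} [Ring R] {n r s : ℕ}
    (α β : Matrix (Fin n) (Fin r) R) (Φ : Fin s → Matrix (Fin n) (Fin n) R) :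
    Matrix (Fin r ⊕ Fin s × Fin n) (Fin r ⊕ Fin s × Fin n) R :=
  Matrix.of fun i j =>
    match i, j with
    | Sum.inl a, Sum.inl b => (βᵀ * α + 1 : Matrix (Fin r) (Fin r) R) a b
    | Sum.inl a, Sum.inr (k, b) => (βᵀ * Φ k : Matrix (Fin r) (Fin n) R) a b
    | Sum.inr (i, a), Sum.inl b => if i.val = 0 then α a b else 0
    | Sum.inr (i, a), Sum.inr (k, b) =>
        if i.val = 0 then Φ k a b
        else if i.val = k.val + 1 then (if a = b then (1 : R) else 0) else 0

section aux
variable {n r s : ℕ} (α β : Matrix (Fin n) (Fin r) ℂ) (Φ : Fin s → Matrix (Fin n) (Fin n) ℂ)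
  (q : Fin r ⊕ Fin s × Fin n → ℂ)

lemma vecm_row_inl (a : Fin r) :
    (vecmStateMatrix α β Φ).mulVec q (Sum.inl a) =
      ((βᵀ*α+1).mulVec (fun b => q (Sum.inl b))) a
        + ∑ k, ((βᵀ*Φ k).mulVec (fun b => q (Sum.inr (k,b)))) a := by
  simp only [Matrix.mulVec, dotProduct, Fintype.sum_sum_type, Fintype.sum_prod_type,
    vecmStateMatrix, Matrix.of_apply]

lemma vecm_row_inr0 (i : Fin s) (hi : i.val = 0) (c : Fin n) :
    (vecmStateMatrix α β Φ).mulVec q (Sum.inr (i,c)) =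
      (α.mulVec (fun b => q (Sum.inl b))) c
        + ∑ k, ((Φ k).mulVec (fun b => q (Sum.inr (k,b)))) c := by
  simp only [Matrix.mulVec, dotProduct, Fintype.sum_sum_type, Fintype.sum_prod_type,
    vecmStateMatrix, Matrix.of_apply, hi, if_true]

lemma vecm_row_inr_succ (i : Fin s) (d : ℕ) (hd : i.val = d+1) (hds : d < s) (a : Fin n) :
    (vecmStateMatrix α β Φ).mulVec q (Sum.inr (i,a)) = q (Sum.inr (⟨d, hds⟩, a)) := by
  simp only [Matrix.mulVec, dotProduct, Fintype.sum_sum_type, Fintype.sum_prod_type,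
    vecmStateMatrix, Matrix.of_apply, hd]
  rw [Finset.sum_eq_single (⟨d, hds⟩ : Fin s)]
  · simp [Finset.sum_eq_single a]
  · intro k _ hk
    have hne : ¬ (d + 1 = k.val + 1) := fun h => hk (by
      have : k.val = d := by omega
      exact Fin.ext (by simp [this]))
    simp [hne, show ¬ d = k.val by omega]
  · simp

lemma vecm_qpow (l : ℂ) (hq : (vecmStateMatrix α β Φ).mulVec q = l • q) (hs0 : 0 < s)
    (hl0 : l ≠ 0) (k : Fin s) (a : Fin n) :
    q (Sum.inr (k, a)) = (l⁻¹)^(k.val) * q (Sum.inr (⟨0, hs0⟩, a)) := by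
  obtain ⟨d, hds⟩ := k
  induction d with
  | zero => simp
  | succ d ih =>
    have hds' : d < s := by omega
    have h1 : q (Sum.inr (⟨d, hds'⟩, a)) = l * q (Sum.inr (⟨d+1, hds⟩, a)) := by
      have := congrFun hq (Sum.inr (⟨d+1, hds⟩, a))
      rw [vecm_row_inr_succ α β Φ q _ d rfl hds'] at this
      simpa using this
    have h2 := ih hds'
    rw [h1] at h2
    have h2' : q (Sum.inr (⟨0, hs0⟩, a)) = l^(d+1) * q (Sum.inr (⟨d+1, hds⟩, a)) := by
      calc q (Sum.inr (⟨0, hs0⟩, a))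
          = l^d * ((l⁻¹)^d * q (Sum.inr (⟨0, hs0⟩, a))) := by
            rw [← mul_assoc, ← mul_pow, mul_inv_cancel₀ hl0, one_pow, one_mul]
        _ = l^d * (l * q (Sum.inr (⟨d+1, hds⟩, a))) := by rw [← h2]
        _ = l^(d+1) * q (Sum.inr (⟨d+1, hds⟩, a)) := by ring
    show q (Sum.inr (⟨d+1, hds⟩, a)) = (l⁻¹)^(d+1) * q (Sum.inr (⟨0, hs0⟩, a))
    rw [h2', ← mul_assoc, inv_pow, inv_mul_cancel₀ (pow_ne_zero _ hl0), one_mul]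

lemma vecm_hbeta (l : ℂ) (hq : (vecmStateMatrix α β Φ).mulVec q = l • q) (hs0 : 0 < s) :
    (l - 1) • (fun b => q (Sum.inl b)) =
      l • (βᵀ.mulVec (fun c => q (Sum.inr (⟨0, hs0⟩, c)))) := by
  funext a
  have H1 := vecm_row_inl α β Φ q a
  rw [congrFun hq (Sum.inl a)] at H1
  have H2 : ∀ c, (α.mulVec (fun b => q (Sum.inl b))) c
        + ∑ k, ((Φ k).mulVec (fun b => q (Sum.inr (k,b)))) c
      = l * q (Sum.inr (⟨0, hs0⟩, c)) := by
    intro c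
    have h := vecm_row_inr0 α β Φ q ⟨0, hs0⟩ rfl c
    rw [congrFun hq (Sum.inr (⟨0, hs0⟩, c))] at h
    simpa using h.symm
  have H2' : (βᵀ*α).mulVec (fun b => q (Sum.inl b)) a
        + ∑ k, ((βᵀ*Φ k).mulVec (fun b => q (Sum.inr (k,b)))) a
      = l * (βᵀ.mulVec (fun c => q (Sum.inr (⟨0, hs0⟩, c)))) a := by
    have key : βᵀ.mulVec (fun c => (α.mulVec (fun b => q (Sum.inl b))) c
        + ∑ k, ((Φ k).mulVec (fun b => q (Sum.inr (k,b)))) c) a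
        = βᵀ.mulVec (fun c => l * q (Sum.inr (⟨0, hs0⟩, c))) a := by
      congr 1; funext c; exact H2 c
    have e1 : βᵀ.mulVec (fun c => (α.mulVec (fun b => q (Sum.inl b))) c
        + ∑ k, ((Φ k).mulVec (fun b => q (Sum.inr (k,b)))) c) a
        = (βᵀ*α).mulVec (fun b => q (Sum.inl b)) a
          + ∑ k, ((βᵀ*Φ k).mulVec (fun b => q (Sum.inr (k,b)))) a := by
      have hfun : (fun c => (α.mulVec (fun b => q (Sum.inl b))) c
          + ∑ k, ((Φ k).mulVec (fun b => q (Sum.inr (k,b)))) c)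
          = α.mulVec (fun b => q (Sum.inl b))
            + ∑ k, (Φ k).mulVec (fun b => q (Sum.inr (k,b))) := by
        funext c; simp [Finset.sum_apply]
      rw [hfun, Matrix.mulVec_add, Matrix.mulVec_mulVec]
      have hsum : βᵀ.mulVec (∑ k, (Φ k).mulVec (fun b => q (Sum.inr (k,b))))
          = ∑ k, (βᵀ * Φ k).mulVec (fun b => q (Sum.inr (k,b))) := by
        rw [show βᵀ.mulVec (∑ k, (Φ k).mulVec fun b => q (Sum.inr (k,b)))
            = βᵀ.mulVecLin (∑ k, (Φ k).mulVec fun b => q (Sum.inr (k,b))) from rfl,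
          map_sum]
        simp only [Matrix.mulVecLin_apply, ← Matrix.mulVec_mulVec]
      rw [hsum]
      simp [Finset.sum_apply]
    have e2 : βᵀ.mulVec (fun c => l * q (Sum.inr (⟨0, hs0⟩, c))) a
        = l * (βᵀ.mulVec (fun c => q (Sum.inr (⟨0, hs0⟩, c)))) a := by
      simp only [Matrix.mulVec, dotProduct, Finset.mul_sum]
      congr 1; funext c; ring
    rw [← e1, key, e2]
  have expand : ((βᵀ*α+1).mulVec (fun b => q (Sum.inl b))) a
      = (βᵀ*α).mulVec (fun b => q (Sum.inl b)) a + q (Sum.inl a) := by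
    rw [Matrix.add_mulVec, Matrix.one_mulVec]; simp
  rw [expand] at H1
  simp only [Pi.smul_apply, smul_eq_mul] at H1 ⊢
  linear_combination H1 + H2'

end aux


lemma scalar2 (N s : ℕ) (hN : 2 ≤ N) (hs : 2*N ≤ s) (l : ℂ) (hl0 : l ≠ 0) :
    l^N * (∑ k : Fin s, (if k.val < N then (l⁻¹)^k.val
        else if k.val < 2*N then -(l⁻¹)^k.val else 0))
    = l ^ ((1:ℤ) - (N:ℤ)) *
        ((∑ j ∈ Finset.Icc N (2*N-1), l^j) - ∑ j ∈ Finset.range N, l^j) := by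
  have hzn : ∀ m : ℕ, l ^ m = l ^ (m : ℤ) := fun m => (zpow_natCast l m).symm
  have hzi : ∀ m : ℕ, (l⁻¹) ^ m = l ^ (-(m:ℤ)) := fun m => by
    rw [inv_pow, ← zpow_natCast, ← _root_.zpow_neg]
  have hz : ∀ a b : ℤ, l ^ (a + b) = l ^ a * l ^ b := fun a b => zpow_add₀ hl0 a b
  rw [Fin.sum_univ_eq_sum_range
    (fun k => if k < N then (l⁻¹)^k else if k < 2*N then -(l⁻¹)^k else 0) s]
  rw [← Finset.sum_subset (Finset.range_subset_range.mpr hs)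
    (by intro x hx hnx
        simp only [Finset.mem_range] at hx hnx
        have h1 : ¬ x < N := by omega
        have h2 : ¬ x < 2*N := by omega
        simp [h1, h2])]
  have hsplit : ∑ k ∈ Finset.range (2*N),
      (if k < N then (l⁻¹)^k else if k < 2*N then -(l⁻¹)^k else 0)
      = (∑ k ∈ Finset.range N, (l⁻¹)^k) - ∑ i ∈ Finset.range N, (l⁻¹)^(N+i) := by
    rw [Finset.range_eq_Ico,
      ← Finset.sum_Ico_consecutive _ (Nat.zero_le N) (by omega : N ≤ 2*N)]
    have e1 : ∑ i ∈ Finset.Ico 0 N,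
        (if i < N then (l⁻¹)^i else if i < 2*N then -(l⁻¹)^i else 0)
        = ∑ k ∈ Finset.range N, (l⁻¹)^k := by
      rw [← Finset.range_eq_Ico]
      apply Finset.sum_congr rfl
      intro i hi
      simp only [Finset.mem_range] at hi
      simp [hi]
    have e2 : ∑ i ∈ Finset.Ico N (2*N),
        (if i < N then (l⁻¹)^i else if i < 2*N then -(l⁻¹)^i else 0)
        = -∑ i ∈ Finset.range N, (l⁻¹)^(N+i) := by
      rw [Finset.sum_Ico_eq_sum_range, show 2*N - N = N by omega, ← Finset.sum_neg_distrib]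
      apply Finset.sum_congr rfl
      intro i hi
      simp only [Finset.mem_range] at hi
      have h1 : ¬ N + i < N := by omega
      have h2 : N + i < 2*N := by omega
      simp [h1, h2]
    rw [e1, e2]; ring
  rw [hsplit]
  have hIcc : ∑ j ∈ Finset.Icc N (2*N-1), l^j = ∑ i ∈ Finset.range N, l^(N+i) := by
    have hI : Finset.Icc N (2*N-1) = Finset.Ico N (2*N) := by
      rw [← Finset.Ico_add_one_right_eq_Icc]; congr 1; omega
    rw [hI, Finset.sum_Ico_eq_sum_range, show 2*N - N = N by omega]
  rw [hIcc]
  have ha1 : l^N * ∑ i ∈ Finset.range N, (l⁻¹)^i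
      = ∑ i ∈ Finset.range N, l^((i:ℤ)+1) := by
    rw [Finset.mul_sum, ← Finset.sum_range_reflect]
    apply Finset.sum_congr rfl
    intro i hi
    simp only [Finset.mem_range] at hi
    rw [hzn, hzi, ← hz]
    congr 1
    omega
  have ha2 : l ^ ((1:ℤ)-(N:ℤ)) * ∑ i ∈ Finset.range N, l^(N+i)
      = ∑ i ∈ Finset.range N, l^((i:ℤ)+1) := by
    rw [Finset.mul_sum]
    apply Finset.sum_congr rfl
    intro i hi
    rw [hzn, ← hz]
    congr 1
    omega
  have hb1 : l^N * ∑ i ∈ Finset.range N, (l⁻¹)^(N+i)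
      = ∑ i ∈ Finset.range N, l^((i:ℤ)+1-(N:ℤ)) := by
    rw [Finset.mul_sum, ← Finset.sum_range_reflect]
    apply Finset.sum_congr rfl
    intro i hi
    simp only [Finset.mem_range] at hi
    rw [hzn, hzi, ← hz]
    congr 1
    omega
  have hb2 : l ^ ((1:ℤ)-(N:ℤ)) * ∑ i ∈ Finset.range N, l^i
      = ∑ i ∈ Finset.range N, l^((i:ℤ)+1-(N:ℤ)) := by
    rw [Finset.mul_sum]
    apply Finset.sum_congr rfl
    intro i hi
    rw [hzn, ← hz]
    congr 1
    omega
  linear_combination ha1 - ha2 - hb1 + hb2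

lemma scalar1 (N s : ℕ) (hN : 2 ≤ N) (hs : 2*N ≤ s) (l : ℂ) (hl0 : l ≠ 0) :
    l^N * ((N:ℂ)*(l/(l-1)) + ∑ k : Fin s,
        (if k.val < N-1 then -((N:ℂ)-(k.val:ℂ)-1) else 0) * (l⁻¹)^k.val)
    = l * ((N:ℂ)*l^N/(l-1) - ∑ k ∈ Finset.Icc 1 (N-1), (k:ℂ)*l^k) := by
  have hzn : ∀ m : ℕ, l ^ m = l ^ (m : ℤ) := fun m => (zpow_natCast l m).symm
  have hzi : ∀ m : ℕ, (l⁻¹) ^ m = l ^ (-(m:ℤ)) := fun m => by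
    rw [inv_pow, ← zpow_natCast, ← _root_.zpow_neg]
  have hz : ∀ a b : ℤ, l ^ (a + b) = l ^ a * l ^ b := fun a b => zpow_add₀ hl0 a b
  rw [Fin.sum_univ_eq_sum_range
    (fun k => (if k < N-1 then -((N:ℂ)-(k:ℂ)-1) else 0) * (l⁻¹)^k) s]
  rw [← Finset.sum_subset (Finset.range_subset_range.mpr (by omega : N-1 ≤ s))
    (by intro x hx hnx
        simp only [Finset.mem_range] at hx hnx
        have h1 : ¬ x < N-1 := by omega
        simp [h1])]
  have hL : l^N * ∑ k ∈ Finset.range (N-1),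
        (if k < N-1 then -((N:ℂ)-(k:ℂ)-1) else 0) * (l⁻¹)^k
      = -∑ k ∈ Finset.range (N-1), ((k:ℂ)+1) * l^((k:ℤ)+2) := by
    rw [Finset.mul_sum, ← Finset.sum_range_reflect, ← Finset.sum_neg_distrib]
    apply Finset.sum_congr rfl
    intro i hi
    simp only [Finset.mem_range] at hi
    have hmem : N-1-1-i < N-1 := by omega
    rw [if_pos hmem]
    have hc : -((N:ℂ) - ((N-1-1-i : ℕ):ℂ) - 1) = -((i:ℂ)+1) := by
      have hcast : ((N-1-1-i : ℕ):ℂ) = (N:ℂ) - (i:ℂ) - 2 := by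
        have : N-1-1-i + i + 2 = N := by omega
        have h2 := congrArg (fun m : ℕ => (m:ℂ)) this
        push_cast at h2
        linear_combination h2
      rw [hcast]; ring
    rw [hc, hzi, hzn]
    rw [show ((i:ℤ)+2) = (N:ℤ) + -((N-1-1-i:ℕ):ℤ) by omega, hz]
    ring
  have hR : l * ∑ k ∈ Finset.Icc 1 (N-1), (k:ℂ)*l^k
      = ∑ k ∈ Finset.range (N-1), ((k:ℂ)+1) * l^((k:ℤ)+2) := by
    have hI : Finset.Icc 1 (N-1) = Finset.Ico 1 N := by
      rw [← Finset.Ico_add_one_right_eq_Icc]; congr 1; omega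
    rw [hI, Finset.sum_Ico_eq_sum_range, show N - 1 = N - 1 from rfl, Finset.mul_sum]
    apply Finset.sum_congr rfl
    intro i hi
    rw [hzn, show ((i:ℤ)+2) = 1 + ((1+i:ℕ):ℤ) by omega, hz, zpow_one]
    push_cast
    ring
  linear_combination hL + hR

/-- Flow case: with S₁ = (N I_r, -(N-1)β', …, -β', 0, …, 0) and
S₂ = (0, I_n, …, I_n, -I_n, …, -I_n, 0, …, 0) (I_n in n-blocks 1..N, -I_n in
n-blocks N+1..2N) — the first two block rows of the flow-case blocking matrix
S_ζ — and Aq = λq (λ ∉ {0,1}):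
S₂Aᴺq = λ^{1-N}(∑_{j=N}^{2N-1} λʲ - ∑_{j=0}^{N-1} λʲ) q₁ and
S₁Aᴺq = λ(Nλᴺ/(λ-1) - ∑_{k=1}^{N-1} k λᵏ) β'q₁.  Consequently, if q₁ ≠ 0 and
either factor condition holds, q is not in the kernel of the flow-case blocked
observation matrix. -/
theorem stmt8 (n r s N : ℕ) (hN : 2 ≤ N) (hs : 2 * N ≤ s)
    (α β : Matrix (Fin n) (Fin r) ℝ) (Φ : Fin s → Matrix (Fin n) (Fin n) ℝ)
    (l : ℂ) (hl0 : l ≠ 0) (hl1 : l ≠ 1)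
    (q : Fin r ⊕ Fin s × Fin n → ℂ)
    (hq : (vecmStateMatrix (α.map Complex.ofReal) (β.map Complex.ofReal)
        (fun k => (Φ k).map Complex.ofReal)).mulVec q = l • q) :
    let A : Matrix (Fin r ⊕ Fin s × Fin n) (Fin r ⊕ Fin s × Fin n) ℂ :=
      vecmStateMatrix (α.map Complex.ofReal) (β.map Complex.ofReal)
        fun k => (Φ k).map Complex.ofReal
    let S1 : Matrix (Fin r) (Fin r ⊕ Fin s × Fin n) ℂ :=
      Matrix.of fun a j =>
        match j with
        | Sum.inl b => if a = b then (N : ℂ) else 0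
        | Sum.inr (k, b) =>
            if k.val < N - 1 then -((N : ℂ) - (k.val : ℂ) - 1) * Complex.ofReal (β b a)
            else 0
    let S2 : Matrix (Fin n) (Fin r ⊕ Fin s × Fin n) ℂ :=
      Matrix.of fun a j =>
        match j with
        | Sum.inl _ => 0
        | Sum.inr (k, b) =>
            if k.val < N then (if a = b then 1 else 0)
            else if k.val < 2 * N then (if a = b then -1 else 0) else 0
    let q1 : Fin n → ℂ := fun a => q (Sum.inr (⟨0, by omega⟩, a))
    ((S2 * A ^ N).mulVec q
        = (l ^ ((1 : ℤ) - (N : ℤ)) *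
            ((∑ j ∈ Finset.Icc N (2 * N - 1), l ^ j) - ∑ j ∈ Finset.range N, l ^ j)) • q1) ∧
    ((S1 * A ^ N).mulVec q
        = (l * ((N : ℂ) * l ^ N / (l - 1) - ∑ k ∈ Finset.Icc 1 (N - 1), (k : ℂ) * l ^ k)) •
            (βᵀ.map Complex.ofReal).mulVec q1) ∧
    (q1 ≠ 0 →
      (((∑ j ∈ Finset.Icc N (2 * N - 1), l ^ j) - ∑ j ∈ Finset.range N, l ^ j) ≠ 0 ∨
        ((βᵀ.map Complex.ofReal).mulVec q1 ≠ 0 ∧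
          ((N : ℂ) * l ^ N / (l - 1) - ∑ k ∈ Finset.Icc 1 (N - 1), (k : ℂ) * l ^ k) ≠ 0)) →
      ((S1 * A ^ N).mulVec q ≠ 0 ∨ (S2 * A ^ N).mulVec q ≠ 0)) := by
  intro A S1 S2 q1
  have hs0 : 0 < s := by omega
  set αC := α.map Complex.ofReal with hαC
  set βC := β.map Complex.ofReal with hβC
  set ΦC : Fin s → Matrix (Fin n) (Fin n) ℂ := fun k => (Φ k).map Complex.ofReal with hΦC
  -- eigen power
  have HAN : ∀ m : ℕ, (A ^ m).mulVec q = l ^ m • q := by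
    intro m
    induction m with
    | zero => simp [Matrix.one_mulVec]
    | succ m ih =>
      rw [pow_succ, ← Matrix.mulVec_mulVec, hq, Matrix.mulVec_smul, ih, smul_smul,
        pow_succ]
      ring_nf
  have hβT : βCᵀ = βᵀ.map Complex.ofReal := by
    ext i j; simp [hβC]
  have hqpow : ∀ (k : Fin s) (a : Fin n), q (Sum.inr (k, a)) = (l⁻¹)^(k.val) * q1 a :=
    fun k a => vecm_qpow αC βC ΦC q l hq hs0 hl0 k a
  have hl1' : l - 1 ≠ 0 := sub_ne_zero.mpr hl1
  have hqβ : ∀ a : Fin r, q (Sum.inl a) = (l/(l-1)) * ((βᵀ.map Complex.ofReal).mulVec q1) a := by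
    intro a
    have h := congrFun (vecm_hbeta αC βC ΦC q l hq hs0) a
    simp only [Pi.smul_apply, smul_eq_mul] at h
    rw [hβT] at h
    have hrhs : (βᵀ.map Complex.ofReal).mulVec (fun c => q (Sum.inr (⟨0, hs0⟩, c)))
        = (βᵀ.map Complex.ofReal).mulVec q1 := rfl
    rw [hrhs] at h
    field_simp
    linear_combination h
  -- S2 computation
  have hS2 : S2.mulVec q = (∑ k : Fin s, (if k.val < N then (l⁻¹)^k.val
      else if k.val < 2*N then -(l⁻¹)^k.val else 0)) • q1 := by
    funext a
    show (∑ j, S2 a j * q j) = _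
    rw [Fintype.sum_sum_type]
    have hz : ∀ b : Fin r, S2 a (Sum.inl b) * q (Sum.inl b) = 0 := by
      intro b; show (0 : ℂ) * _ = 0; ring
    rw [Finset.sum_congr rfl (fun b _ => hz b), Finset.sum_const_zero, zero_add,
      Fintype.sum_prod_type]
    have hinner : ∀ k : Fin s, (∑ b, S2 a (Sum.inr (k, b)) * q (Sum.inr (k, b)))
        = (if k.val < N then (l⁻¹)^k.val else if k.val < 2*N then -(l⁻¹)^k.val else 0)
          * q1 a := by
      intro k
      by_cases h1 : k.val < N
      · have : ∀ b, S2 a (Sum.inr (k, b)) * q (Sum.inr (k, b))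
            = (if a = b then 1 else 0) * q (Sum.inr (k, b)) := by
          intro b; show (if k.val < N then _ else _) * _ = _; rw [if_pos h1]
        rw [Finset.sum_congr rfl (fun b _ => this b)]
        simp only [ite_mul, one_mul, zero_mul, Finset.sum_ite_eq, Finset.mem_univ, if_true]
        rw [hqpow k a, if_pos h1]
      · by_cases h2 : k.val < 2*N
        · have : ∀ b, S2 a (Sum.inr (k, b)) * q (Sum.inr (k, b))
              = (if a = b then -1 else 0) * q (Sum.inr (k, b)) := by
            intro b; show (if k.val < N then _ else _) * _ = _; rw [if_neg h1, if_pos h2]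
          rw [Finset.sum_congr rfl (fun b _ => this b)]
          simp only [ite_mul, neg_mul, one_mul, zero_mul, Finset.sum_ite_eq,
            Finset.mem_univ, if_true]
          rw [hqpow k a, if_neg h1, if_pos h2]
        · have : ∀ b, S2 a (Sum.inr (k, b)) * q (Sum.inr (k, b)) = 0 := by
            intro b
            show (if k.val < N then _ else _) * _ = 0
            rw [if_neg h1, if_neg h2]; ring
          rw [Finset.sum_congr rfl (fun b _ => this b), Finset.sum_const_zero,
            if_neg h1, if_neg h2, zero_mul]
    rw [Finset.sum_congr rfl (fun k _ => hinner k), ← Finset.sum_mul]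
    rfl
  -- S1 computation
  have hS1 : S1.mulVec q = ((N:ℂ)*(l/(l-1)) + ∑ k : Fin s,
      (if k.val < N-1 then -((N:ℂ)-(k.val:ℂ)-1) else 0) * (l⁻¹)^k.val)
        • ((βᵀ.map Complex.ofReal).mulVec q1) := by
    funext a
    show (∑ j, S1 a j * q j) = _
    rw [Fintype.sum_sum_type]
    have hfirst : (∑ b, S1 a (Sum.inl b) * q (Sum.inl b)) = (N:ℂ) * q (Sum.inl a) := by
      have : ∀ b, S1 a (Sum.inl b) * q (Sum.inl b)
          = (if a = b then (N:ℂ) else 0) * q (Sum.inl b) := fun b => rfl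
      rw [Finset.sum_congr rfl (fun b _ => this b)]
      simp [ite_mul, Finset.sum_ite_eq]
    rw [hfirst, Fintype.sum_prod_type]
    have hinner : ∀ k : Fin s, (∑ b, S1 a (Sum.inr (k, b)) * q (Sum.inr (k, b)))
        = ((if k.val < N-1 then -((N:ℂ)-(k.val:ℂ)-1) else 0) * (l⁻¹)^k.val)
          * ((βᵀ.map Complex.ofReal).mulVec q1) a := by
      intro k
      by_cases h1 : k.val < N-1
      · have : ∀ b, S1 a (Sum.inr (k, b)) * q (Sum.inr (k, b))
            = -((N:ℂ)-(k.val:ℂ)-1) * Complex.ofReal (β b a)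
              * ((l⁻¹)^k.val * q1 b) := by
          intro b
          show (if k.val < N - 1 then _ else _) * _ = _
          rw [if_pos h1, hqpow k b]
        rw [Finset.sum_congr rfl (fun b _ => this b), if_pos h1]
        show _ = -((N:ℂ)-(k.val:ℂ)-1) * (l⁻¹)^k.val * (∑ b, (βᵀ.map Complex.ofReal) a b * q1 b)
        rw [Finset.mul_sum]
        apply Finset.sum_congr rfl
        intro b _
        show _ = -((N:ℂ)-(k.val:ℂ)-1) * (l⁻¹)^k.val * (Complex.ofReal (β b a) * q1 b)
        ring
      · have : ∀ b, S1 a (Sum.inr (k, b)) * q (Sum.inr (k, b)) = 0 := by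
          intro b
          show (if k.val < N - 1 then _ else _) * _ = 0
          rw [if_neg h1]; ring
        rw [Finset.sum_congr rfl (fun b _ => this b), Finset.sum_const_zero, if_neg h1]
        ring
    rw [Finset.sum_congr rfl (fun k _ => hinner k), ← Finset.sum_mul, hqβ a]
    show (N:ℂ) * ((l/(l-1)) * ((βᵀ.map Complex.ofReal).mulVec q1) a)
        + (∑ k : Fin s, (if k.val < N-1 then -((N:ℂ)-(k.val:ℂ)-1) else 0) * (l⁻¹)^k.val)
          * ((βᵀ.map Complex.ofReal).mulVec q1) a = _
    simp only [Pi.smul_apply, smul_eq_mul]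
    ring
  -- assemble
  have part2 : (S2 * A ^ N).mulVec q
      = (l ^ ((1 : ℤ) - (N : ℤ)) *
          ((∑ j ∈ Finset.Icc N (2 * N - 1), l ^ j) - ∑ j ∈ Finset.range N, l ^ j)) • q1 := by
    rw [← Matrix.mulVec_mulVec, HAN N, Matrix.mulVec_smul, hS2, smul_smul,
      ← scalar2 N s hN hs l hl0]
  have part1 : (S1 * A ^ N).mulVec q
      = (l * ((N : ℂ) * l ^ N / (l - 1) - ∑ k ∈ Finset.Icc 1 (N - 1), (k : ℂ) * l ^ k)) •
          (βᵀ.map Complex.ofReal).mulVec q1 := by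
    rw [← Matrix.mulVec_mulVec, HAN N, Matrix.mulVec_smul, hS1, smul_smul,
      ← scalar1 N s hN hs l hl0]
  refine ⟨part2, part1, ?_⟩
  intro hq1 hcases
  rcases hcases with h | ⟨hB, hF⟩
  · right
    rw [part2]
    exact smul_ne_zero (mul_ne_zero (zpow_ne_zero _ hl0) h) hq1
  · left
    rw [part1]
    exact smul_ne_zero (mul_ne_zero hl0 hF) hB
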